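/- The following integrals vanish: ∫_{−π/2}^{π/2} log|2·sin(y) − 1| dy = 0 and ∫_{−π/2}^{π/2} log|2·sin(y) + 1| dy = 0. -/

import Mathlib

/-!
On the unit circle, `(z - e^{iφ}) (z - e^{-iφ}) = z (2 cos θ - 2 cos φ)` for `z = e^{iθ}`. Both roots
lie on the unit circle, so the logarithmic Mahler measure of this polynomial is
`log⁺ 1 + log⁺ 1 = 0`, i.e. `∫₀^{2π} log |2 cos θ - 2 cos φ| dθ = 0`. The integrand is symmetric
under `θ ↦ 2π - θ`, so the integral over `[0, π]` vanishes as well, and `θ = π/2 - y` turns it into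
`∫_{-π/2}^{π/2} log |2 sin y - 2 cos φ| dy`. Take `φ = π/3` and `φ = 2π/3`.
-/

open MeasureTheory Real Polynomial

theorem norm_exp_mul_I_sub_mul_exp_mul_I_sub (θ φ : ℝ) :
    ‖(Complex.exp (θ * Complex.I) - Complex.exp (φ * Complex.I)) *
      (Complex.exp (θ * Complex.I) - Complex.exp (-φ * Complex.I))‖ = |2 * cos θ - 2 * cos φ| := by
  have key : (Complex.exp (θ * Complex.I) - Complex.exp (φ * Complex.I)) *
      (Complex.exp (θ * Complex.I) - Complex.exp (-φ * Complex.I)) =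
      Complex.exp (θ * Complex.I) * ((2 * cos θ - 2 * cos φ : ℝ) : ℂ) := by
    push_cast
    rw [Complex.two_cos, Complex.two_cos]
    have hθ : Complex.exp (θ * Complex.I) * Complex.exp (-θ * Complex.I) = 1 := by
      rw [← Complex.exp_add]; simp
    have hφ : Complex.exp (φ * Complex.I) * Complex.exp (-φ * Complex.I) = 1 := by
      rw [← Complex.exp_add]; simp
    linear_combination hφ - hθ
  rw [key, norm_mul, Complex.norm_exp_ofReal_mul_I, one_mul, Complex.norm_real, Real.norm_eq_abs]

theorem integral_log_abs_two_cos_sub_two_cos_zero_two_pi (φ : ℝ) :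
    ∫ θ in (0)..(2 * π), log |2 * cos θ - 2 * cos φ| = 0 := by
  set p : ℂ[X] := (X - C (Complex.exp (φ * Complex.I))) * (X - C (Complex.exp (-φ * Complex.I)))
  have hp : p.logMahlerMeasure = 0 := by
    rw [logMahlerMeasure_mul_eq_add_logMahlerMeasure
        (mul_ne_zero (X_sub_C_ne_zero _) (X_sub_C_ne_zero _)),
      logMahlerMeasure_X_sub_C, logMahlerMeasure_X_sub_C, ← Complex.ofReal_neg,
      Complex.norm_exp_ofReal_mul_I, Complex.norm_exp_ofReal_mul_I, posLog_one, add_zero]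
  rw [logMahlerMeasure_def, circleAverage_def, smul_eq_mul, mul_eq_zero] at hp
  calc ∫ θ in (0)..(2 * π), log |2 * cos θ - 2 * cos φ|
      = ∫ θ in (0)..(2 * π), log ‖eval (circleMap 0 1 θ) p‖ := by
        simp only [p, eval_mul, eval_sub, eval_X, eval_C, circleMap_zero, Complex.ofReal_one,
          one_mul, norm_exp_mul_I_sub_mul_exp_mul_I_sub]
    _ = 0 := hp.resolve_left (by positivity)

theorem intervalIntegrable_log_abs_two_cos_sub_two_cos (φ a b : ℝ) :
    IntervalIntegrable (fun θ ↦ log |2 * cos θ - 2 * cos φ|) volume a b := by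
  have : AnalyticOnNhd ℝ (fun θ ↦ 2 * cos θ - 2 * cos φ) (Set.uIcc a b) :=
    fun _ _ ↦ (analyticAt_const.mul Real.analyticAt_cos).sub analyticAt_const
  simpa [Function.comp_def] using this.meromorphicOn.intervalIntegrable_log_norm

theorem integral_log_abs_two_cos_sub_two_cos_zero_pi (φ : ℝ) :
    ∫ θ in (0)..π, log |2 * cos θ - 2 * cos φ| = 0 := by
  have hsymm : ∫ θ in π..(2 * π), log |2 * cos θ - 2 * cos φ| =
      ∫ θ in (0)..π, log |2 * cos θ - 2 * cos φ| := by
    have h := intervalIntegral.integral_comp_sub_left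
      (fun θ ↦ log |2 * cos θ - 2 * cos φ|) (2 * π) (a := 0) (b := π)
    rw [sub_zero, show 2 * π - π = π by ring] at h
    simpa only [cos_two_pi_sub] using h.symm
  have hsplit := intervalIntegral.integral_add_adjacent_intervals
    (intervalIntegrable_log_abs_two_cos_sub_two_cos φ 0 π)
    (intervalIntegrable_log_abs_two_cos_sub_two_cos φ π (2 * π))
  rw [hsymm, integral_log_abs_two_cos_sub_two_cos_zero_two_pi] at hsplit
  linarith

theorem integral_log_abs_two_sin_sub_two_cos (φ : ℝ) :
    ∫ y in (-(π / 2))..(π / 2), log |2 * sin y - 2 * cos φ| = 0 := by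
  have h := intervalIntegral.integral_comp_sub_left
    (fun θ ↦ log |2 * cos θ - 2 * cos φ|) (π / 2) (a := -(π / 2)) (b := π / 2)
  rw [sub_self, sub_neg_eq_add, add_halves] at h
  simpa only [cos_pi_div_two_sub] using h.trans (integral_log_abs_two_cos_sub_two_cos_zero_pi φ)

theorem log_two_sin_integrals_vanish :
    (∫ y in Set.Icc (-(Real.pi / 2)) (Real.pi / 2), Real.log |2 * Real.sin y - 1|) = 0 ∧
    (∫ y in Set.Icc (-(Real.pi / 2)) (Real.pi / 2), Real.log |2 * Real.sin y + 1|) = 0 := by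
  have hle : -(π / 2) ≤ π / 2 := by linarith [pi_pos]
  simp only [integral_Icc_eq_integral_Ioc, ← intervalIntegral.integral_of_le hle]
  constructor
  · simpa [cos_pi_div_three] using integral_log_abs_two_sin_sub_two_cos (π / 3)
  · simpa [cos_pi_sub, cos_pi_div_three] using integral_log_abs_two_sin_sub_two_cos (π - π / 3)
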